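/- arXiv:2501.13740 — 10 statements merged into one kernel-verified Lean document; each statement's English description precedes it below -/
import Mathlib

section
/- Let I ⊆ ℚ³ be the set of triples (a,b,c) such that a = b implies a ≥ c. Let f : {0,1}ⁿ → ℚ (n ≥ 2) be a function that preserves I (i.e., whenever three tuples a,b,c ∈ {0,1}ⁿ satisfy (aᵢ,bᵢ,cᵢ) ∈ I for all i, then (f(a),f(b),f(c)) ∈ I) and preserves ≠ (whenever aᵢ ≠ bᵢ for all i, then f(a) ≠ f(b)), and that is cyclic: f(a₁,…,aₙ) = f(a₂,…,aₙ,a₁) for all inputs. Then no such f exists. -/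
/-- The ternary relation `I ⊆ ℚ³`: `(a,b,c) ∈ I` iff `a = b → a ≥ c`. -/
def relI (x y z : ℚ) : Prop := x = y → z ≤ x

/-- Indicator of the cyclic interval of length `k` starting at `j`. -/
def cycA (n : ℕ) (j : Fin (n + 2)) (k : ℕ) : Fin (n + 2) → Fin 2 :=
  fun i => if ((i - j : Fin (n + 2)) : ℕ) < k then 1 else 0

lemma subval (n : ℕ) (i j : Fin (n + 2)) :
    ((i - j : Fin (n + 2)) : ℕ) =
      if j.val ≤ i.val then i.val - j.val else i.val + (n + 2) - j.val := by
  have hi := i.isLt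
  have hj := j.isLt
  rw [Fin.sub_def]
  show (n + 2 - j.val + i.val) % (n + 2) = _
  split_ifs with h
  · have h1 : n + 2 - j.val + i.val = (n + 2) + (i.val - j.val) := by omega
    rw [h1, Nat.add_mod_left, Nat.mod_eq_of_lt (by omega)]
  · rw [Nat.mod_eq_of_lt (by omega)]
    omega

lemma fin2_le_one (x : Fin 2) : x ≤ 1 := by omega

lemma relI_of_fin2 (a b c : Fin 2) (h : a = b → c ≤ a) :
    relI ((a : ℕ) : ℚ) ((b : ℕ) : ℚ) ((c : ℕ) : ℚ) := by
  intro hab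
  have hab' : a = b := by
    have : (a : ℕ) = (b : ℕ) := by exact_mod_cast hab
    exact Fin.val_injective this
  exact_mod_cast h hab'

/-- There is no cyclic operation of arity `n ≥ 2` on `{0,1}` (with values in `ℚ`)
preserving `I` and `≠`. -/
theorem stmt_1 (n : ℕ) (f : (Fin (n + 2) → Fin 2) → ℚ)
    (hI : ∀ a b c : Fin (n + 2) → Fin 2,
      (∀ i, relI ((a i : ℕ) : ℚ) ((b i : ℕ) : ℚ) ((c i : ℕ) : ℚ)) →
      relI (f a) (f b) (f c))
    (hne : ∀ a b : Fin (n + 2) → Fin 2, (∀ i, a i ≠ b i) → f a ≠ f b)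
    (hcyc : ∀ a : Fin (n + 2) → Fin 2, f a = f (fun i => a (i + 1))) :
    False := by
  have h11 : ((1 + 1 : Fin (n + 2)) : ℕ) = if n = 0 then 0 else 2 := by
    rw [Fin.add_def, Fin.val_one]
    split_ifs with h
    · subst h; rfl
    · exact Nat.mod_eq_of_lt (by omega)
  -- shifting the interval start doesn't change the value of f
  have hshift : ∀ (j : Fin (n + 2)) (k : ℕ),
      f (cycA n (j + 1) k) = f (cycA n j k) := by
    intro j k
    rw [hcyc (cycA n (j + 1) k)]
    congr 1
    funext i
    show cycA n (j + 1) k (i + 1) = cycA n j k i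
    simp only [cycA]
    rw [add_sub_add_right_eq_sub]
  -- step: f (A 0 (k+1)) ≤ f (A 0 k) for k ≥ 1
  have hstep : ∀ k : ℕ, 1 ≤ k → f (cycA n 0 (k + 1)) ≤ f (cycA n 0 k) := by
    intro k hk
    have hcols : ∀ i, relI ((cycA n 0 k i : ℕ) : ℚ)
        ((cycA n (0 + 1) k i : ℕ) : ℚ) ((cycA n 0 (k + 1) i : ℕ) : ℚ) := by
      intro i
      apply relI_of_fin2
      have hi := i.isLt
      simp only [cycA, sub_zero, zero_add, subval, Fin.val_one]
      grind
    have := hI _ _ _ hcols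
    exact this (hshift 0 k).symm
  -- chain: f (A 0 k) ≤ f (A 0 1) for 1 ≤ k
  have hchain : ∀ k : ℕ, 1 ≤ k → f (cycA n 0 k) ≤ f (cycA n 0 1) := by
    intro k
    induction k with
    | zero => omega
    | succ k ih =>
      intro _
      rcases Nat.lt_or_ge k 1 with h | h
      · interval_cases k
        exact le_refl _
      · exact le_trans (hstep k h) (ih h)
  -- max: every value is ≤ f (A 1 (n+1))
  have hmax : ∀ c, f c ≤ f (cycA n 1 (n + 1)) := by
    intro c
    have hcols : ∀ i, relI ((cycA n 1 (n + 1) i : ℕ) : ℚ)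
        ((cycA n (1 + 1) (n + 1) i : ℕ) : ℚ) ((c i : ℕ) : ℚ) := by
      intro i
      apply relI_of_fin2
      have hi := i.isLt
      simp only [cycA, subval, Fin.val_one, h11]
      by_cases hn : n = 0 <;> simp only [hn, ↓reduceIte] <;> grind
    have := hI _ _ _ hcols
    exact this (hshift 1 (n + 1)).symm
  -- A 0 1 and A 1 (n+1) are complementary
  have hcompl : ∀ i, cycA n 0 1 i ≠ cycA n 1 (n + 1) i := by
    intro i
    have hi := i.isLt
    simp only [cycA, sub_zero, subval, Fin.val_one]
    grind
  have h1 : f (cycA n 0 1) ≤ f (cycA n 1 (n + 1)) := hmax _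
  have h2 : f (cycA n 1 (n + 1)) ≤ f (cycA n 0 1) := by
    have hq : f (cycA n (0 + 1) (n + 1)) = f (cycA n 0 (n + 1)) := hshift 0 (n + 1)
    rw [zero_add] at hq
    calc f (cycA n 1 (n + 1)) = f (cycA n 0 (n + 1)) := hq
      _ ≤ f (cycA n 0 1) := hchain (n + 1) (by omega)
  exact hne _ _ hcompl (le_antisymm h1 h2)
end

section
/- Let I ⊆ ℚ³ be the set of triples (a,b,c) with (a = b → a ≥ c). Let f : {0,1}ⁿ → ℚ preserve I and ≠ (componentwise, as relations), let i be an essential coordinate of f, i.e., there is a tuple a ∈ {0,1}ⁿ with aᵢ = 0 such that f(a) < f(a') where a' agrees with a except a'ᵢ = 1. Then for every tuple b ∈ {0,1}ⁿ with bᵢ = 1, we have f(a) ≠ f(b). -/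
/-- If `f : {0,1}ⁿ → ℚ` preserves `I` and `≠`, `i` is an essential coordinate of `f`
witnessed by a tuple `a` (with `aᵢ = 0` and `f(a) < f(a[i↦1])`), then
`f(a) ≠ f(b)` for every tuple `b` with `bᵢ = 1`. -/
theorem stmt_2 (n : ℕ) (f : (Fin n → Fin 2) → ℚ)
    (hI : ∀ a b c : Fin n → Fin 2,
      (∀ j, relI ((a j : ℕ) : ℚ) ((b j : ℕ) : ℚ) ((c j : ℕ) : ℚ)) →
      relI (f a) (f b) (f c))
    (hne : ∀ a b : Fin n → Fin 2, (∀ j, a j ≠ b j) → f a ≠ f b)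
    (i : Fin n) (a : Fin n → Fin 2) (ha0 : a i = 0)
    (hess : f a < f (Function.update a i 1)) :
    ∀ b : Fin n → Fin 2, b i = 1 → f a ≠ f b := by
  intro b hb h
  have key : ∀ j, relI ((a j : ℕ) : ℚ) ((b j : ℕ) : ℚ)
      ((Function.update a i 1 j : ℕ) : ℚ) := by
    intro j hab
    by_cases hj : j = i
    · subst hj; simp [ha0, hb] at hab
    · simp [Function.update_of_ne hj]
  have := hI a b _ key h
  linarith
end

section
/- Let X ⊆ ℚ³ be the set of triples in which exactly two entries are equal and the third entry is strictly greater than those two. There is no function f : {0,1,2}⁴ → ℚ that is symmetric (invariant under all permutations of its 4 arguments) and preserves X, i.e., such that whenever three quadruples a,b,c ∈ {0,1,2}⁴ satisfy (aᵢ,bᵢ,cᵢ) ∈ X for all i ∈ {1,2,3,4}, then (f(a),f(b),f(c)) ∈ X. -/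
/-- The ternary relation `X ⊆ ℚ³`: exactly two entries are equal and the third is
strictly greater. -/
def relX (x y z : ℚ) : Prop := (x = y ∧ x < z) ∨ (x = z ∧ x < y) ∨ (y = z ∧ y < x)

/-- There is no symmetric 4-ary operation on `{0,1,2}` (with values in `ℚ`)
preserving `X`. -/
theorem stmt_3 (f : (Fin 4 → Fin 3) → ℚ)
    (hsym : ∀ (π : Equiv.Perm (Fin 4)) (a : Fin 4 → Fin 3), f (fun i => a (π i)) = f a)
    (hX : ∀ a b c : Fin 4 → Fin 3,
      (∀ i, relX ((a i : ℕ) : ℚ) ((b i : ℕ) : ℚ) ((c i : ℕ) : ℚ)) →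
      relX (f a) (f b) (f c)) :
    False := by
  set a1 : Fin 4 → Fin 3 := ![0,1,0,2] with ha1
  set b1 : Fin 4 → Fin 3 := ![0,0,2,1] with hb1
  set c1 : Fin 4 → Fin 3 := ![1,0,0,1] with hc1
  set a2 : Fin 4 → Fin 3 := ![0,0,1,2] with ha2
  set b2 : Fin 4 → Fin 3 := ![0,1,0,1] with hb2
  -- f b1 = f a1
  have e1 : f b1 = f a1 := by
    have h := hsym (Equiv.swap 1 2 * Equiv.swap 2 3) a1
    have : (fun i => a1 ((Equiv.swap 1 2 * Equiv.swap 2 3 : Equiv.Perm (Fin 4)) i)) = b1 := by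
      funext i; fin_cases i <;> rfl
    rwa [this] at h
  -- f c1 = f b2
  have e2 : f c1 = f b2 := by
    have h := hsym (Equiv.swap 0 1) b2
    have : (fun i => b2 ((Equiv.swap 0 1 : Equiv.Perm (Fin 4)) i)) = c1 := by
      funext i; fin_cases i <;> rfl
    rwa [this] at h
  -- f a2 = f a1
  have e3 : f a2 = f a1 := by
    have h := hsym (Equiv.swap 1 2) a1
    have : (fun i => a1 ((Equiv.swap 1 2 : Equiv.Perm (Fin 4)) i)) = a2 := by
      funext i; fin_cases i <;> rfl
    rwa [this] at h
  have r1 := hX a1 b1 c1 (by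
    intro i; fin_cases i <;> simp [relX, ha1, hb1, hc1] <;> norm_num)
  have r2 := hX a2 b2 c1 (by
    intro i; fin_cases i <;> simp [relX, ha2, hb2, hc1] <;> norm_num)
  -- from r1 and e1 : f a1 < f c1
  have lt1 : f a1 < f c1 := by
    rcases r1 with ⟨_, h⟩ | ⟨h1, h2⟩ | ⟨h1, h2⟩
    · exact h
    · rw [e1] at h2; exact absurd h2 (lt_irrefl _)
    · rw [e1] at h2; exact absurd h2 (lt_irrefl _)
  -- from r2 and e2 : f c1 < f a2
  have lt2 : f c1 < f a2 := by
    rcases r2 with ⟨h1, h2⟩ | ⟨h1, h2⟩ | ⟨h1, h2⟩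
    · rw [h1, e2] at h2; exact absurd h2 (lt_irrefl _)
    · rw [h1, e2] at h2; exact absurd h2 (lt_irrefl _)
    · rw [e2]; exact h2
  rw [e3] at lt2
  exact absurd (lt1.trans lt2) (lt_irrefl _)
end

section
/- Let X ⊆ ℚ³ be the set of triples in which exactly two entries are equal and the third is strictly greater. Let g : {0,1,2}⁷ → ℚ preserve X and be 2-block symmetric with blocks {1,2,3,4} and {5,6,7}: g(x₁,…,x₇) is invariant under all permutations of its first four arguments and under all permutations of its last three arguments. Then no such g exists. -/
/-- There is no 7-ary operation on `{0,1,2}` (with values in `ℚ`) preserving `X`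
that is 2-block symmetric with blocks `{1,2,3,4}` and `{5,6,7}`. -/
theorem stmt_4 (g : (Fin 7 → Fin 3) → ℚ)
    (hsym : ∀ π : Equiv.Perm (Fin 7), (∀ j : Fin 7, (π j).val < 4 ↔ j.val < 4) →
      ∀ a : Fin 7 → Fin 3, g (fun i => a (π i)) = g a)
    (hX : ∀ a b c : Fin 7 → Fin 3,
      (∀ i, relX ((a i : ℕ) : ℚ) ((b i : ℕ) : ℚ) ((c i : ℕ) : ℚ)) →
      relX (g a) (g b) (g c)) :
    False := by
  -- helper to extract g-equalities from block-preserving permutations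
  have key : ∀ (f finv : Fin 7 → Fin 7) (h1 : Function.LeftInverse finv f)
      (h2 : Function.RightInverse finv f)
      (hblk : ∀ j : Fin 7, ((⟨f, finv, h1, h2⟩ : Equiv.Perm (Fin 7)) j).val < 4 ↔ j.val < 4)
      (u v : Fin 7 → Fin 3), (∀ i, v i = u (f i)) → g v = g u := by
    intro f finv h1 h2 hblk u v hv
    have := hsym ⟨f, finv, h1, h2⟩ hblk u
    rwa [show (fun i => u ((⟨f, finv, h1, h2⟩ : Equiv.Perm (Fin 7)) i)) = v from
      funext fun i => (hv i).symm] at this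
  -- the three matrices
  have r1 : relX (g ![0,0,0,0,1,0,0]) (g ![1,1,0,0,0,1,0]) (g ![0,0,1,1,0,0,1]) := by
    apply hX; intro i; fin_cases i <;> simp only [relX] <;> norm_num [Matrix.cons_val_succ, Matrix.cons_val_zero]
  have r2 : relX (g ![0,0,0,0,1,0,0]) (g ![1,1,0,0,0,1,0]) (g ![0,0,1,2,0,0,1]) := by
    apply hX; intro i; fin_cases i <;> simp only [relX] <;> norm_num [Matrix.cons_val_succ, Matrix.cons_val_zero]
  have r3 : relX (g ![1,0,1,0,1,0,0]) (g ![1,0,0,1,0,1,0]) (g ![2,1,0,0,0,0,1]) := by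
    apply hX; intro i; fin_cases i <;> simp only [relX] <;> norm_num [Matrix.cons_val_succ, Matrix.cons_val_zero]
  -- identify g-values of block-permuted tuples
  have e1 : g ![0,0,1,1,0,0,1] = g ![1,1,0,0,0,1,0] :=
    key ![2,3,0,1,4,6,5] ![2,3,0,1,4,6,5] (by decide) (by decide) (by decide) _ _
      (by decide)
  have e2 : g ![1,0,1,0,1,0,0] = g ![1,1,0,0,0,1,0] :=
    key ![0,2,1,3,5,4,6] ![0,2,1,3,5,4,6] (by decide) (by decide) (by decide) _ _
      (by decide)
  have e3 : g ![1,0,0,1,0,1,0] = g ![1,1,0,0,0,1,0] :=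
    key ![0,2,3,1,4,5,6] ![0,3,1,2,4,5,6] (by decide) (by decide) (by decide) _ _
      (by decide)
  have e4 : g ![2,1,0,0,0,0,1] = g ![0,0,1,2,0,0,1] :=
    key ![3,2,0,1,4,5,6] ![2,3,1,0,4,5,6] (by decide) (by decide) (by decide) _ _
      (by decide)
  rw [e1] at r1
  rw [e2, e3, e4] at r3
  simp only [relX] at r1 r2 r3
  rcases r1 with ⟨h1, h1'⟩ | ⟨h1, h1'⟩ | ⟨h1, h1'⟩ <;>
    rcases r2 with ⟨h2, h2'⟩ | ⟨h2, h2'⟩ | ⟨h2, h2'⟩ <;>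
    rcases r3 with ⟨h3, h3'⟩ | ⟨h3, h3'⟩ | ⟨h3, h3'⟩ <;> linarith
end

section
/- Let f : ℚ³ → ℚ be a function that preserves the strict order < (on ℚ, componentwise), fixes 0 (f(0,0,0)=0), preserves the relation Θ' = {(a,b) ∈ ℚ≥0² : (a=0 ↔ b=0)} componentwise in each pair of arguments on nonnegative inputs, and induces the majority operation on the two-element quotient ℚ≥0/Θ (classes {0} and ℚ>0): for nonnegative a,b,c, f(a,b,c) = 0 iff at least two of a,b,c are 0. Let α : ℚ → ℚ be an order automorphism with α(0) > 0. Then the binary function g(x,y) := f(x,y,α(y)) satisfies: g(0,0) = 0, and for all x,y ∈ ℚ≥0 with (x,y) ≠ (0,0), g(x,y) > 0. In particular g induces a semilattice (i.e., the boolean OR) operation on ℚ≥0/Θ. -/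
/-- The relation `Θ' ⊆ ℚ≥0²` of pairs of nonnegative rationals that are either both
zero or both positive. -/
def Theta' (a b : ℚ) : Prop := 0 ≤ a ∧ 0 ≤ b ∧ (a = 0 ↔ b = 0)

/-- If `f : ℚ³ → ℚ` preserves `<`, fixes `0`, preserves `Θ'` componentwise and
induces the majority operation on `ℚ≥0/Θ`, and `α` is an order automorphism of `ℚ`
with `α(0) > 0`, then `g(x,y) := f(x,y,α(y))` satisfies `g(0,0) = 0` and
`g(x,y) > 0` for all nonnegative `(x,y) ≠ (0,0)` (so `g` induces the semilattice
operation, boolean OR, on `ℚ≥0/Θ`). -/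
theorem stmt_5 (f : ℚ → ℚ → ℚ → ℚ)
    (hlt : ∀ a b c a' b' c' : ℚ, a < a' → b < b' → c < c' → f a b c < f a' b' c')
    (h0 : f 0 0 0 = 0)
    (hTheta : ∀ a a' b b' c c' : ℚ, Theta' a a' → Theta' b b' → Theta' c c' →
      Theta' (f a b c) (f a' b' c'))
    (hmaj : ∀ a b c : ℚ, 0 ≤ a → 0 ≤ b → 0 ≤ c →
      (f a b c = 0 ↔ ((a = 0 ∧ b = 0) ∨ (a = 0 ∧ c = 0) ∨ (b = 0 ∧ c = 0))))
    (α : ℚ ≃o ℚ) (hα : 0 < α 0) :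
    f 0 0 (α 0) = 0 ∧
      ∀ x y : ℚ, 0 ≤ x → 0 ≤ y → ¬(x = 0 ∧ y = 0) → 0 < f x y (α y) := by
  constructor
  · exact (hmaj 0 0 (α 0) le_rfl le_rfl hα.le).2 (Or.inl ⟨rfl, rfl⟩)
  · intro x y hx hy hne
    have hαy : 0 < α y := lt_of_lt_of_le hα (α.monotone hy)
    have hnonneg : 0 ≤ f x y (α y) :=
      (hTheta x x y y (α y) (α y) ⟨hx, hx, Iff.rfl⟩ ⟨hy, hy, Iff.rfl⟩
        ⟨hαy.le, hαy.le, Iff.rfl⟩).1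
    have hne0 : f x y (α y) ≠ 0 := by
      intro h
      rcases (hmaj x y (α y) hx hy hαy.le).1 h with ⟨h1,h2⟩|⟨h1,h2⟩|⟨h1,h2⟩
      · exact hne ⟨h1,h2⟩
      · exact hαy.ne' h2
      · exact hαy.ne' h2
    exact lt_of_le_of_ne hnonneg (Ne.symm hne0)
end

section
/- Let B be a set, G a group of permutations of B acting oligomorphically (for each k, the action of G on Bᵏ has finitely many orbits). Let A be a countable set and (fᵢ)_{i∈ℕ} a sequence of functions fᵢ : Aⁿ → B. Then there exists g : Aⁿ → B such that for every finite subset S ⊆ Aⁿ, the restriction g|_S equals α ∘ fᵢ|_S for some α ∈ G, for infinitely many indices i. -/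
/-- Standard compactness argument: if `G` is an oligomorphic permutation group on `B`
(finitely many orbits on `Bᵏ` for every `k`), `A` is countable, and `(fᵢ)` is a
sequence of functions `Aⁿ → B`, then there is `g : Aⁿ → B` such that for every
finite `S ⊆ Aⁿ`, the restriction `g|_S` is of the form `α ∘ fᵢ|_S` with `α ∈ G`
for infinitely many `i`. -/
theorem stmt_6 (B : Type*) (G : Subgroup (Equiv.Perm B)) (n : ℕ)
    (holig : ∀ k : ℕ, Set.Finite (Set.range
      (fun x : Fin k → B => {y : Fin k → B | ∃ α ∈ G, (fun t => α (x t)) = y})))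
    (A : Type*) [Countable A] (f : ℕ → (Fin n → A) → B) :
    ∃ g : (Fin n → A) → B, ∀ S : Finset (Fin n → A),
      {i : ℕ | ∃ α ∈ G, ∀ s ∈ S, g s = α (f i s)}.Infinite := by
  obtain he | hne := isEmpty_or_nonempty (Fin n → A)
  · refine ⟨fun s => (he.false s).elim, fun S => ?_⟩
    have : {i : ℕ | ∃ α ∈ G, ∀ s ∈ S, (fun s => (he.false s).elim) s = α (f i s)} = Set.univ := by
      ext i
      simp only [Set.mem_setOf_eq, Set.mem_univ, iff_true]
      exact ⟨1, one_mem G, fun s _ => (he.false s).elim⟩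
    rw [this]
    exact Set.infinite_univ
  -- injective enumeration
  obtain ⟨ι, hι⟩ := Countable.exists_injective_nat (Fin n → A)
  set e : ℕ → (Fin n → A) := Function.invFun ι with he_def
  have he : ∀ s, e (ι s) = s := fun s => Function.leftInverse_invFun hι s
  -- relation: f i and f j agree up to G on the first k points
  set R : ℕ → ℕ → ℕ → Prop :=
    fun k i j => ∃ α ∈ G, ∀ m < k, (α : Equiv.Perm B) (f i (e m)) = f j (e m) with hR
  have Rsymm : ∀ k i j, R k i j → R k j i := by
    rintro k i j ⟨α, hα, h⟩
    exact ⟨α⁻¹, inv_mem hα, fun m hm => by rw [← h m hm, Equiv.Perm.inv_def, Equiv.symm_apply_apply]⟩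
  have Rtrans : ∀ k i j l, R k i j → R k j l → R k i l := by
    rintro k i j l ⟨α, hα, h1⟩ ⟨β, hβ, h2⟩
    exact ⟨β * α, mul_mem hβ hα, fun m hm => by
      rw [Equiv.Perm.mul_apply, h1 m hm, h2 m hm]⟩
  have Rmono : ∀ k k' i j, k ≤ k' → R k' i j → R k i j := by
    rintro k k' i j hk ⟨α, hα, h⟩
    exact ⟨α, hα, fun m hm => h m (lt_of_lt_of_le hm hk)⟩
  -- ultrafilter
  set U : Ultrafilter ℕ := Filter.hyperfilter ℕ with hU
  have hinf : ∀ s : Set ℕ, s ∈ U → s.Infinite := by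
    intro s hs
    by_contra h
    rw [Set.not_infinite] at h
    exact Set.Finite.notMem_hyperfilter h hs
  -- for each k, find a representative r with {i | R k i r} ∈ U
  have key : ∀ k : ℕ, ∃ r : ℕ, {i : ℕ | R k i r} ∈ U := by
    intro k
    set c : ℕ → Set (Fin k → B) :=
      fun i => {y : Fin k → B | ∃ α ∈ G, (fun t : Fin k => α (f i (e ↑t))) = y} with hc
    have hrange : Set.Finite (Set.range c) := by
      apply (holig k).subset
      rintro _ ⟨i, rfl⟩
      exact ⟨fun t : Fin k => f i (e ↑t), rfl⟩
    have hmem : Set.range c ∈ Ultrafilter.map c U := by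
      have h2 : c ⁻¹' (Set.range c) = Set.univ := by
        ext i; simp [Set.mem_range]
      rw [Ultrafilter.mem_map, h2]; exact Filter.univ_mem
    obtain ⟨v, _, hv⟩ := Ultrafilter.eq_pure_of_finite_mem hrange hmem
    have hvU : c ⁻¹' {v} ∈ U := by
      rw [← Ultrafilter.mem_map, hv]; exact Filter.mem_pure.mpr rfl
    obtain ⟨r, hr⟩ := Ultrafilter.nonempty_of_mem hvU
    refine ⟨r, Filter.mem_of_superset hvU ?_⟩
    intro i hi
    have hcir : c i = c r := by
      rw [Set.mem_preimage, Set.mem_singleton_iff] at hi hr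
      rw [hi, hr]
    have hself : (fun t : Fin k => f r (e ↑t)) ∈ c r :=
      ⟨1, one_mem G, by funext t; simp⟩
    rw [← hcir] at hself
    obtain ⟨α, hα, hfun⟩ := hself
    refine ⟨α, hα, fun m hm => ?_⟩
    have := congrFun hfun ⟨m, hm⟩
    simpa using this
  choose r hr using key
  -- consecutive representatives are related
  have hstep : ∀ k, R k (r (k + 1)) (r k) := by
    intro k
    obtain ⟨j, hj1, hj2⟩ := Filter.nonempty_of_mem (Filter.inter_mem (hr (k + 1)) (hr k))
    exact Rtrans k _ _ _ (Rsymm k _ _ (Rmono k (k + 1) _ _ (Nat.le_succ k) hj1)) hj2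
  choose β hβG hβ using hstep
  -- build the diagonal permutations
  set α : ℕ → Equiv.Perm B := fun k => Nat.rec 1 (fun k ih => ih * β k) k with hα
  have hα0 : α 0 = 1 := rfl
  have hαs : ∀ k, α (k + 1) = α k * β k := fun k => rfl
  have hαG : ∀ k, α k ∈ G := by
    intro k
    induction k with
    | zero => exact one_mem G
    | succ k ih => rw [hαs]; exact mul_mem ih (hβG k)
  -- the limit values
  set b : ℕ → B := fun m => α (m + 1) (f (r (m + 1)) (e m)) with hb_def
  have hb : ∀ k m, m < k → b m = α k (f (r k) (e m)) := by
    intro k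
    induction k with
    | zero => intro m hm; omega
    | succ k ih =>
      intro m hm
      rcases Nat.lt_succ_iff_lt_or_eq.mp hm with hm' | rfl
      · rw [ih m hm', hαs, Equiv.Perm.mul_apply, hβ k m hm']
      · rfl
  refine ⟨fun s => b (ι s), fun S => ?_⟩
  set k := (S.sup ι) + 1 with hk
  apply (hinf _ (hr k)).mono
  intro i hi
  obtain ⟨γ, hγ, hγh⟩ := hi
  refine ⟨α k * γ, mul_mem (hαG k) hγ, fun s hs => ?_⟩
  have hlt : ι s < k := Nat.lt_succ_of_le (Finset.le_sup hs)
  show b (ι s) = (α k * γ) (f i s)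
  have hbs : b (ι s) = α k (f (r k) (e (ι s))) := hb k (ι s) hlt
  rw [hbs, ← hγh (ι s) hlt, he s]; rfl
end

section
/- For any positive integers k ≤ 2n+1 with b,b' ∈ {1,2}: a cyclic function f : {0,1,2}^{2n+1} → ℚ preserving the relation X ⊆ ℚ³ (triples with two equal entries and the third strictly greater) satisfies: whenever k + ℓ + i = 2n+1 with k,ℓ,i ≥ 1, then (f([b]*k), f([b]*ℓ), f([b']*i)) ∈ X, where [b]*k denotes the tuple consisting of k consecutive entries equal to b followed by zeros (and f is constant on all cyclic rotations of such tuples by cyclicity). In particular, if k = ℓ then f([b]*k) < f([b']*i). -/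
/-- `[b]*k`: the tuple with `k` consecutive entries equal to `b` followed by zeros. -/
def blockTuple (m : ℕ) (b : Fin 3) (k : ℕ) : Fin m → Fin 3 :=
  fun j => if (j : ℕ) < k then b else 0

open Fin.NatCast

open Fin.CommRing in
lemma rot_aux (m : ℕ) (f : (Fin (m + 1) → Fin 3) → ℚ)
    (hcyc : ∀ a : Fin (m + 1) → Fin 3, f a = f (fun j => a (j + 1)))
    (a : Fin (m + 1) → Fin 3) : ∀ s : ℕ,
    f a = f (fun j => a (j + (s : Fin (m + 1)))) := by
  intro s
  induction s with
  | zero => simp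
  | succ s ih =>
    rw [ih, hcyc (fun j => a (j + (s : Fin (m + 1))))]
    congr 1
    funext j
    congr 1
    push_cast
    ring

/-- For a cyclic `f : {0,1,2}^{2n+1} → ℚ` preserving `X`: whenever
`k + ℓ + i = 2n+1` with `k,ℓ,i ≥ 1` and `b,b' ∈ {1,2}`, we have
`(f([b]*k), f([b]*ℓ), f([b']*i)) ∈ X`; in particular if `k = ℓ` then
`f([b]*k) < f([b']*i)`. -/
theorem stmt_10 (n : ℕ) (f : (Fin (2 * n + 1) → Fin 3) → ℚ)
    (hcyc : ∀ a : Fin (2 * n + 1) → Fin 3, f a = f (fun j => a (j + 1)))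
    (hX : ∀ a b c : Fin (2 * n + 1) → Fin 3,
      (∀ i, relX ((a i : ℕ) : ℚ) ((b i : ℕ) : ℚ) ((c i : ℕ) : ℚ)) →
      relX (f a) (f b) (f c))
    (b b' : Fin 3) (hb : b ≠ 0) (hb' : b' ≠ 0)
    (k ℓ i : ℕ) (hk : 1 ≤ k) (hℓ : 1 ≤ ℓ) (hi : 1 ≤ i)
    (hsum : k + ℓ + i = 2 * n + 1) :
    relX (f (blockTuple (2 * n + 1) b k)) (f (blockTuple (2 * n + 1) b ℓ))
        (f (blockTuple (2 * n + 1) b' i)) ∧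
      (k = ℓ → f (blockTuple (2 * n + 1) b k) < f (blockTuple (2 * n + 1) b' i)) := by
  have hN : 2 * n + 1 = k + ℓ + i := hsum.symm
  have hbpos : (0 : ℚ) < ((b : ℕ) : ℚ) := by
    have : 0 < (b : ℕ) := Nat.pos_of_ne_zero (fun h => hb (Fin.ext h))
    exact_mod_cast this
  have hb'pos : (0 : ℚ) < ((b' : ℕ) : ℚ) := by
    have : 0 < (b' : ℕ) := Nat.pos_of_ne_zero (fun h => hb' (Fin.ext h))
    exact_mod_cast this
  -- rotated versions
  have hB : f (blockTuple (2 * n + 1) b ℓ) =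
      f (fun j => blockTuple (2 * n + 1) b ℓ (j + ((ℓ + i : ℕ) : Fin (2 * n + 1)))) :=
    rot_aux (2 * n) f hcyc _ (ℓ + i)
  have hC : f (blockTuple (2 * n + 1) b' i) =
      f (fun j => blockTuple (2 * n + 1) b' i (j + ((i : ℕ) : Fin (2 * n + 1)))) :=
    rot_aux (2 * n) f hcyc _ i
  have hli : ((ℓ + i : ℕ) : Fin (2 * n + 1)).val = ℓ + i := by
    rw [Fin.val_natCast]; exact Nat.mod_eq_of_lt (by omega)
  have hii : ((i : ℕ) : Fin (2 * n + 1)).val = i := by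
    rw [Fin.val_natCast]; exact Nat.mod_eq_of_lt (by omega)
  have key : relX (f (blockTuple (2 * n + 1) b k))
      (f (fun j => blockTuple (2 * n + 1) b ℓ (j + ((ℓ + i : ℕ) : Fin (2 * n + 1)))))
      (f (fun j => blockTuple (2 * n + 1) b' i (j + ((i : ℕ) : Fin (2 * n + 1))))) := by
    apply hX
    intro j
    have hj : (j : ℕ) < (2 * n + 1) := j.isLt
    have hBval : ((j + ((ℓ + i : ℕ) : Fin (2 * n + 1))) : Fin (2 * n + 1)).val = ((j : ℕ) + (ℓ + i)) % (2 * n + 1) := by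
      rw [Fin.add_def, hli]
    have hCval : ((j + ((i : ℕ) : Fin (2 * n + 1))) : Fin (2 * n + 1)).val = ((j : ℕ) + i) % (2 * n + 1) := by
      rw [Fin.add_def, hii]
    simp only [blockTuple, hBval, hCval]
    by_cases h1 : (j : ℕ) < k
    · have e1 : ¬ ((j : ℕ) + (ℓ + i)) % (2 * n + 1) < ℓ := by
        have : ((j : ℕ) + (ℓ + i)) % (2 * n + 1) = (j : ℕ) + (ℓ + i) := Nat.mod_eq_of_lt (by omega)
        omega
      have e2 : ¬ ((j : ℕ) + i) % (2 * n + 1) < i := by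
        have : ((j : ℕ) + i) % (2 * n + 1) = (j : ℕ) + i := Nat.mod_eq_of_lt (by omega)
        omega
      simp only [if_pos h1, if_neg e1, if_neg e2, relX]
      right; right
      simpa using hbpos
    · by_cases h2 : (j : ℕ) < k + ℓ
      · have e1 : ((j : ℕ) + (ℓ + i)) % (2 * n + 1) < ℓ := by
          have : ((j : ℕ) + (ℓ + i)) % (2 * n + 1) = (j : ℕ) - k := by
            have h3 : (j : ℕ) + (ℓ + i) = ((j : ℕ) - k) + (2 * n + 1) := by omega
            rw [h3, Nat.add_mod_right, Nat.mod_eq_of_lt (by omega)]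
          omega
        have e2 : ¬ ((j : ℕ) + i) % (2 * n + 1) < i := by
          have : ((j : ℕ) + i) % (2 * n + 1) = (j : ℕ) + i := Nat.mod_eq_of_lt (by omega)
          omega
        simp only [if_neg h1, if_pos e1, if_neg e2, relX]
        right; left
        simpa using hbpos
      · have e1 : ¬ ((j : ℕ) + (ℓ + i)) % (2 * n + 1) < ℓ := by
          have : ((j : ℕ) + (ℓ + i)) % (2 * n + 1) = (j : ℕ) - k := by
            have h3 : (j : ℕ) + (ℓ + i) = ((j : ℕ) - k) + (2 * n + 1) := by omega
            rw [h3, Nat.add_mod_right, Nat.mod_eq_of_lt (by omega)]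
          omega
        have e2 : ((j : ℕ) + i) % (2 * n + 1) < i := by
          have : ((j : ℕ) + i) % (2 * n + 1) = (j : ℕ) - (k + ℓ) := by
            have h3 : (j : ℕ) + i = ((j : ℕ) - (k + ℓ)) + (2 * n + 1) := by omega
            rw [h3, Nat.add_mod_right, Nat.mod_eq_of_lt (by omega)]
          omega
        simp only [if_neg h1, if_neg e1, if_pos e2, relX]
        left
        simpa using hb'pos
  rw [← hB, ← hC] at key
  refine ⟨key, fun hkl => ?_⟩
  subst hkl
  rcases key with ⟨_, h⟩ | ⟨h1, h2⟩ | ⟨h1, h2⟩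
  · exact h
  · exact absurd h2 (lt_irrefl _)
  · exact absurd h2 (lt_irrefl _)
end

section
/- Let X ⊆ ℚ³ be the set of triples with exactly two equal entries, the third strictly greater. There is no cyclic function f : {0,1,2}^{2n+1} → ℚ (for n ≥ 2 even) that preserves X. -/
namespace Stmt11Aux

open Fin.NatCast

lemma relX_lt {x y : ℚ} (h : relX x x y) : x < y := by
  rcases h with ⟨_, h⟩ | ⟨_, h⟩ | ⟨_, h⟩ <;> first | exact h | exact absurd h (lt_irrefl x)

lemma relX_eq {x y z : ℚ} (h : relX x y z) (h1 : x < z) (h2 : y < z) : x = y := by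
  rcases h with ⟨h, _⟩ | ⟨h, _⟩ | ⟨h, _⟩
  · exact h
  · exact absurd h1 (by rw [h]; exact lt_irrefl z)
  · exact absurd h2 (by rw [h]; exact lt_irrefl z)

lemma relX_eq' {c x y : ℚ} (h : relX c x y) (hy : c < y) : x = c := by
  rcases h with ⟨h, _⟩ | ⟨h, _⟩ | ⟨h, h2⟩
  · exact h.symm
  · exact absurd hy (by rw [h]; exact lt_irrefl y)
  · exact absurd hy (by rw [← h]; exact not_lt_of_gt h2)

/-- block of `k` consecutive `b`'s starting at `s` (cyclically), zeros elsewhere -/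
def blk (n : ℕ) (b : Fin 3) (s : Fin (2 * n + 1)) (k : ℕ) : Fin (2 * n + 1) → Fin 3 :=
  fun i => if (i - s).val < k then b else 0

lemma blk_apply (n : ℕ) (b : Fin 3) (s : Fin (2 * n + 1)) (k : ℕ) (i : Fin (2 * n + 1)) :
    blk n b s k i =
      if (s.val ≤ i.val ∧ i.val < s.val + k) ∨ i.val + (2 * n + 1) < s.val + k then b
      else 0 := by
  have h1 := i.isLt
  have h2 := s.isLt
  have hsub : (i - s).val = ((2 * n + 1) - s.val + i.val) % (2 * n + 1) := by
    rw [Fin.sub_def]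
  have hiff : (i - s).val < k ↔
      ((s.val ≤ i.val ∧ i.val < s.val + k) ∨ i.val + (2 * n + 1) < s.val + k) := by
    rw [hsub]
    rcases le_or_gt s.val i.val with h | h
    · rw [show (2 * n + 1) - s.val + i.val = (i.val - s.val) + (2 * n + 1) by omega,
        Nat.add_mod_right, Nat.mod_eq_of_lt (by omega)]
      omega
    · rw [Nat.mod_eq_of_lt (by omega)]
      omega
  unfold blk
  by_cases hc : (i - s).val < k
  · rw [if_pos hc, if_pos (hiff.mp hc)]
  · rw [if_neg hc, if_neg (fun hh => hc (hiff.mpr hh))]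

section

variable {n : ℕ} (f : (Fin (2 * n + 1) → Fin 3) → ℚ)
  (hcyc : ∀ a : Fin (2 * n + 1) → Fin 3, f a = f (fun j => a (j + 1)))

include hcyc

lemma blk_f_shift (b : Fin 3) (s : Fin (2 * n + 1)) (k : ℕ) :
    f (blk n b (s + 1) k) = f (blk n b s k) := by
  haveI : NeZero (2 * n + 1) := ⟨by omega⟩
  rw [hcyc (blk n b (s + 1) k)]
  congr 1
  funext j
  unfold blk
  rw [add_sub_add_right_eq_sub j s 1]

lemma blk_f_zero (b : Fin 3) (k : ℕ) :
    ∀ t : ℕ, f (blk n b ((t : ℕ) : Fin (2 * n + 1)) k) = f (blk n b 0 k) := by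
  haveI : NeZero (2 * n + 1) := ⟨by omega⟩
  intro t
  induction t with
  | zero => norm_num
  | succ t ih =>
    have h : ((t + 1 : ℕ) : Fin (2 * n + 1)) = ((t : ℕ) : Fin (2 * n + 1)) + 1 := by
      push_cast; ring
    rw [h, blk_f_shift f hcyc, ih]

end

/-- value lemmas -/
lemma relX_b00 (b : Fin 3) (hb : b = 1 ∨ b = 2) :
    relX ((b : ℕ) : ℚ) (((0 : Fin 3) : ℕ) : ℚ) (((0 : Fin 3) : ℕ) : ℚ) := by
  rcases hb with rfl | rfl <;> norm_num [relX]

lemma relX_0b0 (b : Fin 3) (hb : b = 1 ∨ b = 2) :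
    relX (((0 : Fin 3) : ℕ) : ℚ) ((b : ℕ) : ℚ) (((0 : Fin 3) : ℕ) : ℚ) := by
  rcases hb with rfl | rfl <;> norm_num [relX]

lemma relX_00b (b : Fin 3) (hb : b = 1 ∨ b = 2) :
    relX (((0 : Fin 3) : ℕ) : ℚ) (((0 : Fin 3) : ℕ) : ℚ) ((b : ℕ) : ℚ) := by
  rcases hb with rfl | rfl <;> norm_num [relX]

lemma relX_1bb (b b' : Fin 3) (hb : (b = 1 ∧ b' = 2) ∨ (b = 2 ∧ b' = 1)) :
    relX (((1 : Fin 3) : ℕ) : ℚ) ((b : ℕ) : ℚ) ((b' : ℕ) : ℚ) := by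
  rcases hb with ⟨rfl, rfl⟩ | ⟨rfl, rfl⟩ <;> norm_num [relX]

end Stmt11Aux

open Fin.NatCast in
open Stmt11Aux in
/-- For `n ≥ 2` even, there is no cyclic function `f : {0,1,2}^{2n+1} → ℚ`
preserving `X`. -/
theorem stmt_11 (n : ℕ) (hn : 2 ≤ n) (hev : Even n)
    (f : (Fin (2 * n + 1) → Fin 3) → ℚ)
    (hcyc : ∀ a : Fin (2 * n + 1) → Fin 3, f a = f (fun j => a (j + 1)))
    (hX : ∀ a b c : Fin (2 * n + 1) → Fin 3,
      (∀ i, relX ((a i : ℕ) : ℚ) ((b i : ℕ) : ℚ) ((c i : ℕ) : ℚ)) →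
      relX (f a) (f b) (f c)) :
    False := by
  haveI : NeZero (2 * n + 1) := ⟨by omega⟩
  -- Rule A : three disjoint blocks covering the cycle
  have lemA : ∀ (b₁ b₂ b₃ : Fin 3), (b₁ = 1 ∨ b₁ = 2) → (b₂ = 1 ∨ b₂ = 2) → (b₃ = 1 ∨ b₃ = 2) →
      ∀ (k₁ k₂ k₃ : ℕ), 1 ≤ k₁ → 1 ≤ k₂ → 1 ≤ k₃ → k₁ + k₂ + k₃ = 2 * n + 1 →
      relX (f (blk n b₁ 0 k₁)) (f (blk n b₂ 0 k₂)) (f (blk n b₃ 0 k₃)) := by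
    intro b₁ b₂ b₃ hb₁ hb₂ hb₃ k₁ k₂ k₃ h1 h2 h3 hsum
    have hv1 : ((k₁ : ℕ) : Fin (2 * n + 1)).val = k₁ := by
      rw [Fin.val_natCast]; exact Nat.mod_eq_of_lt (by omega)
    have hv2 : ((k₁ + k₂ : ℕ) : Fin (2 * n + 1)).val = k₁ + k₂ := by
      rw [Fin.val_natCast]; exact Nat.mod_eq_of_lt (by omega)
    have key := hX (blk n b₁ 0 k₁) (blk n b₂ ((k₁ : ℕ) : Fin (2 * n + 1)) k₂)
      (blk n b₃ ((k₁ + k₂ : ℕ) : Fin (2 * n + 1)) k₃) ?_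
    · rwa [blk_f_zero f hcyc b₂ k₂ k₁, blk_f_zero f hcyc b₃ k₃ (k₁ + k₂)] at key
    · intro i
      have hi := i.isLt
      rw [blk_apply, blk_apply, blk_apply, hv1, hv2, Fin.val_zero]
      rcases Nat.lt_or_ge i.val k₁ with h | h
      · rw [if_pos (by omega), if_neg (by omega), if_neg (by omega)]
        exact relX_b00 b₁ hb₁
      rcases Nat.lt_or_ge i.val (k₁ + k₂) with h' | h'
      · rw [if_neg (by omega), if_pos (by omega), if_neg (by omega)]
        exact relX_0b0 b₂ hb₂
      · rw [if_neg (by omega), if_neg (by omega), if_pos (by omega)]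
        exact relX_00b b₃ hb₃
  -- Rule B : singleton of value 1 inside the overlap of two blocks with values {1,2}
  have lemB : ∀ (b b' : Fin 3), (b = 1 ∧ b' = 2) ∨ (b = 2 ∧ b' = 1) →
      ∀ (k₂ k₃ : ℕ), 1 ≤ k₂ → 1 ≤ k₃ → k₂ < 2 * n + 1 → k₂ + k₃ = 2 * n + 2 →
      relX (f (blk n 1 0 1)) (f (blk n b 0 k₂)) (f (blk n b' 0 k₃)) := by
    intro b b' hb k₂ k₃ h2 h3 hk2 hsum
    have hv1 : ((k₂ : ℕ) : Fin (2 * n + 1)).val = k₂ := by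
      rw [Fin.val_natCast]; exact Nat.mod_eq_of_lt (by omega)
    have key := hX (blk n 1 0 1) (blk n b 0 k₂)
      (blk n b' ((k₂ : ℕ) : Fin (2 * n + 1)) k₃) ?_
    · rwa [blk_f_zero f hcyc b' k₃ k₂] at key
    · intro i
      have hi := i.isLt
      rw [blk_apply, blk_apply, blk_apply, hv1, Fin.val_zero]
      rcases Nat.eq_zero_or_pos i.val with h | h
      · rw [if_pos (by omega), if_pos (by omega), if_pos (by omega)]
        exact relX_1bb b b' hb
      rcases Nat.lt_or_ge i.val k₂ with h' | h'
      · rw [if_neg (by omega), if_pos (by omega), if_neg (by omega)]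
        exact relX_0b0 b (by rcases hb with ⟨hb, _⟩ | ⟨hb, _⟩ <;> [exact Or.inl hb; exact Or.inr hb])
      · rw [if_neg (by omega), if_neg (by omega), if_pos (by omega)]
        exact relX_00b b' (by rcases hb with ⟨_, hb⟩ | ⟨_, hb⟩ <;> [exact Or.inr hb; exact Or.inl hb])
  obtain ⟨p, hp⟩ := hev
  have hp1 : 1 ≤ p := by omega
  -- main induction: all short odd blocks have the same f-value
  have main : ∀ k, k ≤ p →
      f (blk n 1 0 (2 * k + 1)) = f (blk n 1 0 1) ∧
      f (blk n 2 0 (2 * k + 1)) = f (blk n 1 0 1) := by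
    intro k
    induction k with
    | zero =>
      intro _
      have e1 : 2 * 0 + 1 = 1 := by ring
      rw [e1]
      refine ⟨rfl, ?_⟩
      have hA1 := lemA 1 1 1 (Or.inl rfl) (Or.inl rfl) (Or.inl rfl) 1 1 (2 * n - 1)
        (by omega) (by omega) (by omega) (by omega)
      have hA2 := lemA 2 2 1 (Or.inr rfl) (Or.inr rfl) (Or.inl rfl) 1 1 (2 * n - 1)
        (by omega) (by omega) (by omega) (by omega)
      have hA3 := lemA 1 2 1 (Or.inl rfl) (Or.inr rfl) (Or.inl rfl) 1 1 (2 * n - 1)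
        (by omega) (by omega) (by omega) (by omega)
      exact (relX_eq hA3 (relX_lt hA1) (relX_lt hA2)).symm
    | succ k ih =>
      intro hk
      obtain ⟨ih1, ih2⟩ := ih (by omega)
      have e1 : 2 * (k + 1) + 1 = 2 * k + 3 := by ring
      rw [e1]
      set L := 2 * n - 2 * k - 1 with hL
      -- c < f (blk n b 0 L) for b = 1, 2
      have hlt1 : f (blk n 1 0 1) < f (blk n 1 0 L) := by
        have h := lemA 1 1 1 (Or.inl rfl) (Or.inl rfl) (Or.inl rfl) 1 (2 * k + 1) L
          (by omega) (by omega) (by omega) (by omega)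
        rw [ih1] at h
        exact relX_lt h
      have hlt2 : f (blk n 1 0 1) < f (blk n 2 0 L) := by
        have h := lemA 1 1 2 (Or.inl rfl) (Or.inl rfl) (Or.inr rfl) 1 (2 * k + 1) L
          (by omega) (by omega) (by omega) (by omega)
        rw [ih1] at h
        exact relX_lt h
      constructor
      · have h := lemB 1 2 (Or.inl ⟨rfl, rfl⟩) (2 * k + 3) L (by omega) (by omega)
          (by omega) (by omega)
        exact relX_eq' h hlt2
      · have h := lemB 2 1 (Or.inr ⟨rfl, rfl⟩) (2 * k + 3) L (by omega) (by omega)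
          (by omega) (by omega)
        exact relX_eq' h hlt1
  -- final contradiction
  obtain ⟨q, hq⟩ : ∃ q, p = q + 1 := ⟨p - 1, by omega⟩
  have h1 := (main q (by omega)).1
  have h2 := (main (q + 1) (by omega)).1
  have hA := lemA 1 1 1 (Or.inl rfl) (Or.inl rfl) (Or.inl rfl) 1 (2 * q + 1) (2 * (q + 1) + 1)
    (by omega) (by omega) (by omega) (by omega)
  rw [h1, h2] at hA
  exact absurd (relX_lt hA) (lt_irrefl _)
end

section
/- With m-pow and m-low as in the adjunction between τ-structures and power-signature structures (m at least the maximal arity of τ), for every τ-structure X, the structure m-low(m-pow(X)) is isomorphic to X. -/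
/-- The generating relation for the quotient defining `m-low`. -/
def lowRel (m : ℕ) (X : Type*)
    (EX : ∀ ℓ : Fin (m + 1), (Fin ℓ.val → Fin m) → (Fin ℓ.val → Fin m) → Set (X × X)) :
    (X × Fin m) → (X × Fin m) → Prop :=
  fun y z => ∃ (ℓ : Fin (m + 1)) (i j : Fin ℓ.val → Fin m),
    (y.1, z.1) ∈ EX ℓ i j ∧ ∃ t : Fin ℓ.val, i t = y.2 ∧ j t = z.2

/-- The eq-relations of the `m`-th power structure `m-pow(X)`. -/
def powEq (m : ℕ) (X : Type*) :
    ∀ ℓ : Fin (m + 1), (Fin ℓ.val → Fin m) → (Fin ℓ.val → Fin m) →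
      Set ((Fin m → X) × (Fin m → X)) :=
  fun _ i j => {ab | ∀ t, ab.1 (i t) = ab.2 (j t)}

/-- `m-low(m-pow(X)) ≅ X`: the map `[(a,p)] ↦ a p` is a well-defined bijection from
the quotient domain of `m-low(m-pow(X))` to `X` preserving all relations in both
directions. -/
theorem stmt_15 (ι : Type*) (ar : ι → ℕ) (m : ℕ) (hm : ∀ r : ι, ar r ≤ m)
    (hm1 : 1 ≤ m) (X : Type*) [Nonempty X] (RX : ∀ r : ι, Set (Fin (ar r) → X)) :
    ∃ e : Quot (lowRel m (Fin m → X) (powEq m X)) ≃ X,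
      (∀ (a : Fin m → X) (p : Fin m),
        e (Quot.mk (lowRel m (Fin m → X) (powEq m X)) (a, p)) = a p) ∧
      (∀ (r : ι) (u : Fin (ar r) → Quot (lowRel m (Fin m → X) (powEq m X))),
        ((∃ (a : Fin m → X) (i : Fin (ar r) → Fin m),
            (fun p => a (i p)) ∈ RX r ∧
            ∀ p, u p = Quot.mk (lowRel m (Fin m → X) (powEq m X)) (a, i p))
          ↔ (fun p => e (u p)) ∈ RX r)) := by
  classical
  set R := lowRel m (Fin m → X) (powEq m X) with hR
  have hwd : ∀ y z : (Fin m → X) × Fin m, R y z → y.1 y.2 = z.1 z.2 := by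
    rintro y z ⟨ℓ, i, j, hij, t, hti, htj⟩
    rw [← hti, ← htj]; exact hij t
  let f : Quot R → X := Quot.lift (fun y => y.1 y.2) hwd
  have hz : (0 : ℕ) < m := hm1
  let g : X → Quot R := fun x => Quot.mk R (fun _ => x, ⟨0, hz⟩)
  have hfmk : ∀ y : (Fin m → X) × Fin m, f (Quot.mk R y) = y.1 y.2 := fun _ => rfl
  have hgf : ∀ q, g (f q) = q := by
    intro q
    induction q using Quot.ind with
    | _ y =>
      rcases y with ⟨a, p⟩
      apply (Quot.sound _).symm
      refine ⟨⟨1, by omega⟩, fun _ => p, fun _ => ⟨0, hz⟩, ?_, ⟨0, Nat.one_pos⟩, rfl, rfl⟩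
      intro t; rfl
  let e : Quot R ≃ X := ⟨f, g, hgf, fun x => rfl⟩
  refine ⟨e, fun a p => rfl, fun r u => ⟨?_, ?_⟩⟩
  · rintro ⟨a, i, hmem, hu⟩
    convert hmem using 1
    funext p
    show f (u p) = a (i p)
    rw [hu p]
  · intro hmem
    refine ⟨fun k => if h : k.val < ar r then f (u ⟨k.val, h⟩) else Classical.arbitrary X,
      fun p => ⟨p.val, lt_of_lt_of_le p.isLt (hm r)⟩, ?_, ?_⟩
    · convert hmem using 1
      funext p
      simp only [p.isLt, dif_pos]
      rfl
    · intro p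
      apply e.injective
      simp only [e, Equiv.coe_fn_mk]
      rw [hfmk]
      simp [p.isLt]
end

section
/- Let M be a linear minion over a semiring R with dimension d that is good-for-composition: for finite sets of maps F ⊆ B^A, G ⊆ C^B and ξ ∈ M(F), ζ ∈ M(G), the matrix ζ*ξ indexed by H = G∘F with row (ζ*ξ)(h) = Σ_{f∈F} Σ_{g∈G, h=g∘f} ξ(f) ⊙ ζ(g) lies in M(H). Then the composition operation * on such matrix families is compatible with restriction: for K ⊆ L, if ξ_K = (ξ_L)^σ and ζ_{f(K)} = (ζ_{f(L)})^σ' under the natural restriction minor maps σ, σ', then the composed family χ defined by χ_K(h) = Σ_{f∈F_K} Σ_{g∈G_{f(K)}, h=g∘f} ξ_K(f) ⊙ ζ_{f(K)}(g) satisfies (χ_L)^σ = χ_K for the natural restriction map σ : H_L → H_K. -/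
/-- Restriction of a function defined on (the subtype of) `T` to a subset `S ⊆ T`. -/
def restrictMap {X Y : Type*} {S T : Finset X} (hST : S ⊆ T)
    (f : {x // x ∈ T} → Y) : {x // x ∈ S} → Y :=
  fun x => f ⟨x.1, hST x.2⟩

/-- The image (as a finset) of a function defined on a finset. -/
def imgSet {X Y : Type*} [DecidableEq Y] (S : Finset X) (f : {x // x ∈ S} → Y) :
    Finset Y :=
  S.attach.image f

lemma mem_imgSet {X Y : Type*} [DecidableEq Y] (S : Finset X) (f : {x // x ∈ S} → Y)
    (x : {x // x ∈ S}) : f x ∈ imgSet S f :=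
  Finset.mem_image_of_mem f (S.mem_attach x)

/-- The composition `g ∘ f` of `f : S → B` with `g : f(S) → C`. -/
def compMap {X Y Z : Type*} [DecidableEq Y] (S : Finset X) (f : {x // x ∈ S} → Y)
    (g : {y // y ∈ imgSet S f} → Z) : {x // x ∈ S} → Z :=
  fun x => g ⟨f x, mem_imgSet S f x⟩

lemma imgSet_restrict_subset {X Y : Type*} [DecidableEq Y] {S T : Finset X}
    (hST : S ⊆ T) (f : {x // x ∈ T} → Y) :
    imgSet S (restrictMap hST f) ⊆ imgSet T f := by
  intro y hy
  simp only [imgSet, Finset.mem_image] at hy ⊢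
  obtain ⟨x, -, rfl⟩ := hy
  exact ⟨⟨x.1, hST x.2⟩, Finset.mem_attach _ _, rfl⟩

lemma fiber_sum {α β M : Type*} [AddCommMonoid M] [DecidableEq β]
    (s : Finset α) (t : Finset β) (φ : α → β) (hmap : ∀ a ∈ s, φ a ∈ t)
    (v : α → M) (p : β → Prop) [DecidablePred p] :
    ∑ b ∈ t.filter p, ∑ a ∈ s.filter (fun a => φ a = b), v a
      = ∑ a ∈ s.filter (fun a => p (φ a)), v a := by
  rw [← Finset.sum_fiberwise_of_maps_to (g := φ) (t := t.filter p)
      (fun a ha => by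
        rw [Finset.mem_filter] at ha ⊢
        exact ⟨hmap a ha.1, ha.2⟩) v]
  refine Finset.sum_congr rfl fun b hb => Finset.sum_congr ?_ fun _ _ => rfl
  rw [Finset.mem_filter] at hb
  ext a
  simp only [Finset.mem_filter]
  constructor
  · rintro ⟨ha, rfl⟩
    exact ⟨⟨ha, hb.2⟩, rfl⟩
  · rintro ⟨⟨ha, -⟩, rfl⟩
    exact ⟨ha, rfl⟩

lemma restrict_comp {A B C : Type*} [DecidableEq B] {K L : Finset A} (hKL : K ⊆ L)
    (f : {x // x ∈ L} → B) (g : {y // y ∈ imgSet L f} → C) :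
    restrictMap hKL (compMap L f g) =
      compMap K (restrictMap hKL f) (restrictMap (imgSet_restrict_subset hKL f) g) :=
  rfl

/-- Composition of linear-minion matrix families is compatible with restriction:
given `K ⊆ L`, strategy sets `F_L` (with `F_K` its set of restrictions) and
`G_T` (for finsets `T` of `B`), and matrices `ξ`, `ζ` compatible with the
restriction minors (`ξ_K = (ξ_L)^σ` and `ζ_{f(K)} = (ζ_{f(L)})^{σ'}`), the composed
family `χ`, with `χ_K(h) = Σ_{f ∈ F_K} Σ_{g ∈ G_{f(K)}, h = g∘f} ξ_K(f) ⊙ ζ_{f(K)}(g)`,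
satisfies `(χ_L)^σ = χ_K` for the natural restriction map `σ : H_L → H_K`. -/
theorem stmt_17 {A B C R : Type*} [DecidableEq B] [DecidableEq C] [CommSemiring R]
    (d : ℕ) (K L : Finset A) (hKL : K ⊆ L)
    (FL : Finset ({x // x ∈ L} → B)) (FK : Finset ({x // x ∈ K} → B))
    (G : ∀ T : Finset B, Finset ({y // y ∈ T} → C))
    (ξL : ({x // x ∈ L} → B) → Fin d → R) (ξK : ({x // x ∈ K} → B) → Fin d → R)
    (ζ : ∀ T : Finset B, ({y // y ∈ T} → C) → Fin d → R)
    (hFK : FK = FL.image (restrictMap hKL))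
    (hξ : ∀ fk : {x // x ∈ K} → B, fk ∈ FK →
      ξK fk = ∑ f ∈ FL.filter (fun f => restrictMap hKL f = fk), ξL f)
    (hG : ∀ f ∈ FL, G (imgSet K (restrictMap hKL f)) =
      (G (imgSet L f)).image (restrictMap (imgSet_restrict_subset hKL f)))
    (hζ : ∀ f ∈ FL, ∀ g : {y // y ∈ imgSet K (restrictMap hKL f)} → C,
      g ∈ G (imgSet K (restrictMap hKL f)) →
      ζ (imgSet K (restrictMap hKL f)) g =
        ∑ g' ∈ (G (imgSet L f)).filter
          (fun g' => restrictMap (imgSet_restrict_subset hKL f) g' = g),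
          ζ (imgSet L f) g') :
    ∀ h : {x // x ∈ K} → C,
      (∑ h' ∈ ((FL.biUnion (fun f => (G (imgSet L f)).image (compMap L f))).filter
          (fun h' => restrictMap hKL h' = h)),
        ∑ f ∈ FL, ∑ g ∈ (G (imgSet L f)).filter (fun g => compMap L f g = h'),
          (fun t => ξL f t * ζ (imgSet L f) g t))
      =
      ∑ f ∈ FK, ∑ g ∈ (G (imgSet K f)).filter (fun g => compMap K f g = h),
        (fun t => ξK f t * ζ (imgSet K f) g t) := by
  intro h
  funext t
  simp only [Finset.sum_apply]
  rw [Finset.sum_comm]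
  have lhs : ∀ f ∈ FL,
      (∑ h' ∈ ((FL.biUnion (fun f => (G (imgSet L f)).image (compMap L f))).filter
          (fun h' => restrictMap hKL h' = h)),
        ∑ g ∈ (G (imgSet L f)).filter (fun g => compMap L f g = h'),
          ξL f t * ζ (imgSet L f) g t)
      = ∑ g ∈ (G (imgSet L f)).filter
          (fun g => restrictMap hKL (compMap L f g) = h),
          ξL f t * ζ (imgSet L f) g t := by
    intro f hf
    exact fiber_sum _ _ _
      (fun g hg => Finset.mem_biUnion.2 ⟨f, hf, Finset.mem_image_of_mem _ hg⟩) _ _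
  rw [Finset.sum_congr rfl lhs]
  symm
  have step1 : ∀ fk ∈ FK,
      (∑ g ∈ (G (imgSet K fk)).filter (fun g => compMap K fk g = h),
        ξK fk t * ζ (imgSet K fk) g t)
      = ∑ f ∈ FL.filter (fun f => restrictMap hKL f = fk),
          ∑ g ∈ (G (imgSet L f)).filter
            (fun g => restrictMap hKL (compMap L f g) = h),
            ξL f t * ζ (imgSet L f) g t := by
    intro fk hfk
    have hξt : ξK fk t = ∑ f ∈ FL.filter (fun f => restrictMap hKL f = fk), ξL f t := by
      rw [hξ fk hfk, Finset.sum_apply]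
    rw [Finset.sum_congr rfl (fun g _ => by rw [hξt, Finset.sum_mul]),
      Finset.sum_comm]
    refine Finset.sum_congr rfl fun f hf => ?_
    rw [Finset.mem_filter] at hf
    obtain ⟨hf, rfl⟩ := hf
    have hζt : ∀ g ∈ G (imgSet K (restrictMap hKL f)),
        ζ (imgSet K (restrictMap hKL f)) g t =
          ∑ g' ∈ (G (imgSet L f)).filter
            (fun g' => restrictMap (imgSet_restrict_subset hKL f) g' = g),
            ζ (imgSet L f) g' t := by
      intro g hg
      rw [hζ f hf g hg, Finset.sum_apply]
    calc (∑ g ∈ (G (imgSet K (restrictMap hKL f))).filter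
            (fun g => compMap K (restrictMap hKL f) g = h),
          ξL f t * ζ (imgSet K (restrictMap hKL f)) g t)
        = ∑ g ∈ (G (imgSet K (restrictMap hKL f))).filter
            (fun g => compMap K (restrictMap hKL f) g = h),
          ∑ g' ∈ (G (imgSet L f)).filter
            (fun g' => restrictMap (imgSet_restrict_subset hKL f) g' = g),
            ξL f t * ζ (imgSet L f) g' t := by
          refine Finset.sum_congr rfl fun g hg => ?_
          rw [Finset.mem_filter] at hg
          rw [hζt g hg.1, Finset.mul_sum]
      _ = ∑ g' ∈ (G (imgSet L f)).filter
            (fun g' => compMap K (restrictMap hKL f)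
              (restrictMap (imgSet_restrict_subset hKL f) g') = h),
            ξL f t * ζ (imgSet L f) g' t := by
          refine fiber_sum _ _ _ (fun g' hg' => ?_) _ _
          rw [hG f hf]
          exact Finset.mem_image_of_mem _ hg'
      _ = ∑ g ∈ (G (imgSet L f)).filter
            (fun g => restrictMap hKL (compMap L f g) = h),
            ξL f t * ζ (imgSet L f) g t := by
          refine Finset.sum_congr ?_ fun _ _ => rfl
          ext g
          simp only [Finset.mem_filter, restrict_comp hKL f g]
  rw [Finset.sum_congr rfl step1]
  exact Finset.sum_fiberwise_of_maps_to
    (fun f hf => hFK ▸ Finset.mem_image_of_mem _ hf) _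
end
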